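/- For every nonnegative integer n, the first-order differential operator X_2 = Σ_{i=1}^N (z_i − z_{i+1})^{-1} (z_i² ∂_i − z_{i+1}² ∂_{i+1}) leaves invariant the space 𝒳_2^n = ℂ[σ_1, τ_{N−1}, τ_N] ∩ P^n; that is, if f is a complex polynomial in z_1,…,z_N of total degree at most n that can be written as a polynomial in σ_1, τ_{N−1} and τ_N, then X_2 f (computed in the field of rational functions ℂ(z_1,…,z_N)) is again a polynomial in σ_1, τ_{N−1}, τ_N of total degree at most n. -/

import Mathlib

set_option synthInstance.maxHeartbeats 1000000
set_option maxHeartbeats 1000000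


noncomputable section

open MvPolynomial

/-- Polynomials in `N` variables over `ℂ`. -/
abbrev MvP (N : ℕ) : Type := MvPolynomial (Fin N) ℂ

/-- The canonical embedding of polynomials into the field of rational functions. -/
noncomputable def phi (N : ℕ) : MvP N →+* FractionRing (MvP N) :=
  algebraMap (MvP N) (FractionRing (MvP N))

/-- The power sum `σ_k = ∑ i, z_i ^ k`. -/
def sig (N k : ℕ) : MvP N := ∑ i : Fin N, X i ^ k

/-- The top elementary symmetric polynomial `τ_N = ∏ i, z_i`. -/
def tauTop (N : ℕ) : MvP N := ∏ i : Fin N, X i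

/-- The elementary symmetric polynomial `τ_{N-1} = ∑ i, ∏_{j ≠ i} z_j`. -/
def tauSub (N : ℕ) : MvP N := ∑ i : Fin N, ∏ j ∈ Finset.univ.erase i, X j

/-- The operator `X_2 = ∑ i (z_i - z_{i+1})⁻¹ (z_i² ∂_i - z_{i+1}² ∂_{i+1})` (indices cyclic),
computed in the field of rational functions. -/
noncomputable def X2op (N : ℕ) [NeZero N] (f : MvP N) : FractionRing (MvP N) :=
  ∑ i : Fin N, (phi N (X i - X (i + 1)))⁻¹ *
    phi N (X i ^ 2 * pderiv i f - X (i + 1) ^ 2 * pderiv (i + 1) f)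

section Lemmas
set_option linter.unusedSectionVars false

variable (N : ℕ) [NeZero N]

lemma phi_injective : Function.Injective (phi N) :=
  IsFractionRing.injective (MvP N) (FractionRing (MvP N))

lemma phi_ne_zero {p : MvP N} (hp : p ≠ 0) : phi N p ≠ 0 := by
  intro h
  exact hp (phi_injective N (by simpa using h))

lemma succ_ne (hN : 2 ≤ N) (i : Fin N) : i + 1 ≠ i := by
  intro h
  have hv := congrArg Fin.val h
  have hlt := i.isLt
  rw [Fin.val_add, Fin.val_one', Nat.mod_eq_of_lt (show 1 < N by omega)] at hv
  rcases Nat.lt_or_ge (i.val + 1) N with hc | hc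
  · rw [Nat.mod_eq_of_lt hc] at hv; omega
  · have h2 : i.val + 1 = N := by omega
    rw [h2, Nat.mod_self] at hv; omega

lemma X_sub_ne (hN : 2 ≤ N) (i : Fin N) : (X i - X (i + 1) : MvP N) ≠ 0 := by
  intro h
  exact succ_ne N hN i (X_injective (sub_eq_zero.mp h).symm)

lemma X2op_zero : X2op N 0 = 0 := by
  simp [X2op]

lemma X2op_add (a b : MvP N) : X2op N (a + b) = X2op N a + X2op N b := by
  simp only [X2op, ← Finset.sum_add_distrib]
  apply Finset.sum_congr rfl
  intro i _
  rw [show (X i ^ 2 * pderiv i (a + b) - X (i + 1) ^ 2 * pderiv (i + 1) (a + b) : MvP N)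
      = (X i ^ 2 * pderiv i a - X (i + 1) ^ 2 * pderiv (i + 1) a)
        + (X i ^ 2 * pderiv i b - X (i + 1) ^ 2 * pderiv (i + 1) b) from by
    rw [map_add, map_add]; ring, map_add, mul_add]

lemma X2op_sum {α : Type*} (s : Finset α) (F : α → MvP N) :
    X2op N (∑ j ∈ s, F j) = ∑ j ∈ s, X2op N (F j) := by
  classical
  induction s using Finset.induction_on with
  | empty => simpa using X2op_zero N
  | insert _ _ h ih => rw [Finset.sum_insert h, X2op_add, ih, Finset.sum_insert h]

lemma X2op_mul (a b : MvP N) :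
    X2op N (a * b) = phi N a * X2op N b + phi N b * X2op N a := by
  simp only [X2op, Finset.mul_sum, ← Finset.sum_add_distrib]
  apply Finset.sum_congr rfl
  intro i _
  rw [show (X i ^ 2 * pderiv i (a * b) - X (i + 1) ^ 2 * pderiv (i + 1) (a * b) : MvP N)
      = a * (X i ^ 2 * pderiv i b - X (i + 1) ^ 2 * pderiv (i + 1) b)
        + b * (X i ^ 2 * pderiv i a - X (i + 1) ^ 2 * pderiv (i + 1) a) from by
    rw [pderiv_mul, pderiv_mul]; ring, map_add, map_mul, map_mul, mul_add]
  ring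

lemma X2op_eigen (hN : 2 ≤ N) (f : MvP N) (r : Fin N → MvP N)
    (h : ∀ i, (X i ^ 2 * pderiv i f - X (i + 1) ^ 2 * pderiv (i + 1) f : MvP N)
        = (X i - X (i + 1)) * r i) :
    X2op N f = phi N (∑ i, r i) := by
  rw [X2op, map_sum]
  apply Finset.sum_congr rfl
  intro i _
  rw [h i, map_mul, inv_mul_cancel_left₀ (phi_ne_zero N (X_sub_ne N hN i))]

lemma pderiv_prod_X_of_not_mem {s : Finset (Fin N)} {i : Fin N} (h : i ∉ s) :
    pderiv i (∏ j ∈ s, (X j : MvP N)) = 0 := by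
  classical
  induction s using Finset.induction_on with
  | empty => simp
  | @insert a s ha ih =>
      rw [Finset.prod_insert ha, pderiv_mul,
        ih (fun hi => h (Finset.mem_insert_of_mem hi)),
        pderiv_X_of_ne (fun hai : a = i => h (hai ▸ Finset.mem_insert_self a s))]
      ring

lemma pderiv_prod_X_of_mem {s : Finset (Fin N)} {i : Fin N} (h : i ∈ s) :
    pderiv i (∏ j ∈ s, (X j : MvP N)) = ∏ j ∈ s.erase i, X j := by
  rw [← Finset.mul_prod_erase s _ h, pderiv_mul, pderiv_X_self,
    pderiv_prod_X_of_not_mem N (Finset.notMem_erase i s)]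
  ring

lemma pderiv_sig1 (i : Fin N) : pderiv i (sig N 1) = 1 := by
  classical
  simp [sig, pderiv_X, Finset.sum_pi_single']

lemma X2op_sig1 (hN : 2 ≤ N) : X2op N (sig N 1) = phi N ((2 : MvP N) * sig N 1) := by
  rw [X2op_eigen N hN _ (fun i => X i + X (i + 1))
    (fun i => by rw [pderiv_sig1, pderiv_sig1]; ring)]
  congr 1
  rw [Finset.sum_add_distrib,
    show ∑ i : Fin N, (X (i + 1) : MvP N) = ∑ i : Fin N, X i from
      Fintype.sum_equiv (Equiv.addRight 1) _ _ (fun i => rfl), two_mul, sig]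
  simp [pow_one]

lemma X2op_tauTop (hN : 2 ≤ N) : X2op N (tauTop N) = phi N ((N : MvP N) * tauTop N) := by
  rw [X2op_eigen N hN _ (fun _ => tauTop N) (fun i => by
    rw [show tauTop N = ∏ j : Fin N, (X j : MvP N) from rfl,
      pderiv_prod_X_of_mem N (Finset.mem_univ i),
      pderiv_prod_X_of_mem N (Finset.mem_univ (i + 1)),
      pow_two, pow_two, mul_assoc, mul_assoc,
      Finset.mul_prod_erase _ _ (Finset.mem_univ i),
      Finset.mul_prod_erase _ _ (Finset.mem_univ (i + 1)), sub_mul])]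
  rw [Finset.sum_const, Finset.card_univ, Fintype.card_fin, nsmul_eq_mul]

lemma key_tauSub (i : Fin N) :
    (X i : MvP N) ^ 2 * pderiv i (tauSub N) = X i * tauSub N - tauTop N := by
  classical
  have step : ∀ k : Fin N, (X i : MvP N) ^ 2 * pderiv i (∏ j ∈ Finset.univ.erase k, X j)
      = X i * ∏ j ∈ Finset.univ.erase k, X j
        - (if k = i then X i * ∏ j ∈ Finset.univ.erase i, (X j : MvP N) else 0) := by
    intro k
    by_cases hk : k = i
    · subst hk
      rw [pderiv_prod_X_of_not_mem N (Finset.notMem_erase _ Finset.univ), if_pos rfl]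
      ring
    · have hi : i ∈ Finset.univ.erase k :=
        Finset.mem_erase.mpr ⟨Ne.symm hk, Finset.mem_univ i⟩
      rw [pderiv_prod_X_of_mem N hi, if_neg hk, sub_zero, pow_two, mul_assoc,
        Finset.mul_prod_erase _ _ hi]
  rw [show tauSub N = ∑ k : Fin N, ∏ j ∈ Finset.univ.erase k, (X j : MvP N) from rfl,
    map_sum, Finset.mul_sum, Finset.sum_congr rfl (fun k _ => step k),
    Finset.sum_sub_distrib, ← Finset.mul_sum, Finset.sum_ite_eq' Finset.univ i, if_pos (Finset.mem_univ i),
    Finset.mul_prod_erase _ _ (Finset.mem_univ i)]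
  rfl

lemma X2op_tauSub (hN : 2 ≤ N) : X2op N (tauSub N) = phi N ((N : MvP N) * tauSub N) := by
  rw [X2op_eigen N hN _ (fun _ => tauSub N) (fun i => by
    rw [key_tauSub, key_tauSub, sub_mul]; ring)]
  rw [Finset.sum_const, Finset.card_univ, Fintype.card_fin, nsmul_eq_mul]

end Lemmas

lemma degree_add' {σ : Type*} (u v : σ →₀ ℕ) : (u + v).degree = u.degree + v.degree := by
  simp [Finsupp.degree_eq_weight_one, map_add]

lemma hc_mul (p q : MvP N) (d : ℕ) :
    homogeneousComponent d (p * q)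
      = ∑ e ∈ Finset.range (d + 1),
          homogeneousComponent e p * homogeneousComponent (d - e) q := by
  classical
  ext m
  rw [coeff_homogeneousComponent, MvPolynomial.coeff_sum]
  simp only [coeff_mul, coeff_homogeneousComponent]
  rw [Finset.sum_comm]
  have inner : ∀ x : (Fin N →₀ ℕ) × (Fin N →₀ ℕ),
      (∑ e ∈ Finset.range (d + 1),
        (if x.1.degree = e then coeff x.1 p else 0) *
          (if x.2.degree = d - e then coeff x.2 q else 0))
      = if x.1.degree ∈ Finset.range (d + 1) then
          coeff x.1 p * (if x.2.degree = d - x.1.degree then coeff x.2 q else 0) else 0 := by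
    intro x
    rw [show (∑ e ∈ Finset.range (d + 1),
        (if x.1.degree = e then coeff x.1 p else 0) *
          (if x.2.degree = d - e then coeff x.2 q else 0))
        = ∑ e ∈ Finset.range (d + 1), (if x.1.degree = e then
            coeff x.1 p * (if x.2.degree = d - e then coeff x.2 q else 0) else 0) from
      Finset.sum_congr rfl (fun e _ => by rw [ite_mul, zero_mul])]
    exact Finset.sum_ite_eq (Finset.range (d + 1)) x.1.degree _
  rw [Finset.sum_congr rfl (fun x _ => inner x)]
  by_cases hm : m.degree = d
  · rw [if_pos hm]
    apply Finset.sum_congr rfl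
    intro x hx
    have hx' : x.1 + x.2 = m := Finset.HasAntidiagonal.mem_antidiagonal.mp hx
    have hdeg : x.1.degree + x.2.degree = d := by rw [← degree_add', hx', hm]
    rw [if_pos (Finset.mem_range.mpr (by omega)), if_pos (by omega)]
  · rw [if_neg hm]
    symm
    apply Finset.sum_eq_zero
    intro x hx
    have hx' : x.1 + x.2 = m := Finset.HasAntidiagonal.mem_antidiagonal.mp hx
    have hdeg : x.1.degree + x.2.degree = m.degree := by rw [← degree_add', hx']
    by_cases h1 : x.1.degree ∈ Finset.range (d + 1)
    · rw [if_pos h1]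
      have h1' := Finset.mem_range.mp h1
      rw [if_neg (by omega), mul_zero]
    · rw [if_neg h1]

lemma sig_hom (N : ℕ) : (sig N 1).IsHomogeneous 1 :=
  MvPolynomial.IsHomogeneous.sum _ _ _ (fun i _ => by
    simpa [pow_one] using isHomogeneous_X ℂ i)

lemma tauTop_hom (N : ℕ) : (tauTop N).IsHomogeneous N := by
  have := MvPolynomial.IsHomogeneous.prod Finset.univ (fun i : Fin N => (X i : MvP N))
    (fun _ => 1) (fun i _ => isHomogeneous_X ℂ i)
  simpa [tauTop, Finset.card_univ] using this

lemma tauSub_hom (N : ℕ) : (tauSub N).IsHomogeneous (N - 1) := by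
  apply MvPolynomial.IsHomogeneous.sum
  intro i _
  have := MvPolynomial.IsHomogeneous.prod (Finset.univ.erase i)
    (fun j : Fin N => (X j : MvP N)) (fun _ => 1) (fun j _ => isHomogeneous_X ℂ j)
  simpa [Finset.card_erase_of_mem, Finset.card_univ] using this

lemma X2op_C (N : ℕ) [NeZero N] (r : ℂ) : X2op N (C r) = 0 := by
  simp [X2op, pderiv_C]

lemma eigen_case (N : ℕ) [NeZero N] {A : Subalgebra ℂ (MvP N)} {x c : MvP N} {k : ℕ}
    (hx : x ∈ A) (hc : c ∈ A) (hom : x.IsHomogeneous k) (hc0 : c.totalDegree = 0)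
    (heig : X2op N x = phi N (c * x)) (d : ℕ) :
    homogeneousComponent d x ∈ A ∧
      ∃ g ∈ A, g.totalDegree ≤ d ∧ phi N g = X2op N (homogeneousComponent d x) := by
  rw [homogeneousComponent_of_mem ((mem_homogeneousSubmodule _ _).mpr hom)]
  by_cases hd : d = k
  · rw [if_pos hd]
    refine ⟨hx, c * x, mul_mem hc hx, ?_, heig.symm⟩
    calc (c * x).totalDegree ≤ c.totalDegree + x.totalDegree := totalDegree_mul c x
      _ ≤ 0 + k := by
          exact add_le_add (le_of_eq hc0) hom.totalDegree_le
      _ = d := by omega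
  · rw [if_neg hd]
    exact ⟨zero_mem A, 0, zero_mem A, by simp, by rw [map_zero, X2op_zero]⟩

lemma natCast_deg0 (N n : ℕ) : ((n : MvP N)).totalDegree = 0 := by
  rw [← map_natCast (C : ℂ →+* MvP N) n, totalDegree_C]

lemma main_lemma (N : ℕ) [NeZero N] (hN : 2 ≤ N) {f : MvP N}
    (hf : f ∈ Algebra.adjoin ℂ ({sig N 1, tauSub N, tauTop N} : Set (MvP N))) (d : ℕ) :
    homogeneousComponent d f ∈ Algebra.adjoin ℂ ({sig N 1, tauSub N, tauTop N} : Set (MvP N)) ∧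
      ∃ g ∈ Algebra.adjoin ℂ ({sig N 1, tauSub N, tauTop N} : Set (MvP N)),
        g.totalDegree ≤ d ∧ phi N g = X2op N (homogeneousComponent d f) := by
  set A := Algebra.adjoin ℂ ({sig N 1, tauSub N, tauTop N} : Set (MvP N)) with hA
  revert d
  induction hf using Algebra.adjoin_induction with
  | mem x hx =>
      have hxA : x ∈ A := Algebra.subset_adjoin hx
      rcases hx with h | h | h
      · subst h
        exact eigen_case N hxA
          (by
            have : ((2 : ℕ) : MvP N) ∈ A := Subalgebra.natCast_mem A 2
            simpa using this)
          (sig_hom N) (by simpa using natCast_deg0 N 2)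
          (X2op_sig1 N hN)
      · subst h
        exact eigen_case N hxA (Subalgebra.natCast_mem A N) (tauSub_hom N)
          (natCast_deg0 N N) (X2op_tauSub N hN)
      · rw [Set.mem_singleton_iff] at h
        subst h
        exact eigen_case N hxA (Subalgebra.natCast_mem A N) (tauTop_hom N)
          (natCast_deg0 N N) (X2op_tauTop N hN)
  | algebraMap r =>
      exact eigen_case N (Subalgebra.algebraMap_mem A r) (zero_mem A)
        (isHomogeneous_C _ r) totalDegree_zero
        (by rw [zero_mul, map_zero]; exact X2op_C N r)
  | add x y hx hy ihx ihy =>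
      intro d
      rw [map_add]
      obtain ⟨hxm, gx, hgxA, hgxd, hgxphi⟩ := ihx d
      obtain ⟨hym, gy, hgyA, hgyd, hgyphi⟩ := ihy d
      refine ⟨add_mem hxm hym, gx + gy, add_mem hgxA hgyA, ?_, ?_⟩
      · exact le_trans (totalDegree_add gx gy) (max_le hgxd hgyd)
      · rw [map_add, X2op_add, hgxphi, hgyphi]
  | mul x y hx hy ihx ihy =>
      intro d
      have hxm : ∀ e, homogeneousComponent e x ∈ A := fun e => (ihx e).1
      have hym : ∀ e, homogeneousComponent e y ∈ A := fun e => (ihy e).1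
      choose gx hgxA hgxd hgxphi using fun e => (ihx e).2
      choose gy hgyA hgyd hgyphi using fun e => (ihy e).2
      rw [hc_mul]
      constructor
      · exact sum_mem (fun e _ => mul_mem (hxm e) (hym (d - e)))
      · refine ⟨∑ e ∈ Finset.range (d + 1),
          (homogeneousComponent e x * gy (d - e)
            + homogeneousComponent (d - e) y * gx e), ?_, ?_, ?_⟩
        · exact sum_mem (fun e _ => add_mem (mul_mem (hxm e) (hgyA (d - e)))
            (mul_mem (hym (d - e)) (hgxA e)))
        · refine le_trans (totalDegree_finset_sum _ _) (Finset.sup_le ?_)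
          intro e he
          have he' : e ≤ d := by
            have := Finset.mem_range.mp he; omega
          refine le_trans (totalDegree_add _ _) (max_le ?_ ?_)
          · refine le_trans (totalDegree_mul _ _) ?_
            have h1 : (homogeneousComponent e x).totalDegree ≤ e :=
              (homogeneousComponent_isHomogeneous e x).totalDegree_le
            have h2 := hgyd (d - e)
            omega
          · refine le_trans (totalDegree_mul _ _) ?_
            have h1 : (homogeneousComponent (d - e) y).totalDegree ≤ d - e :=
              (homogeneousComponent_isHomogeneous (d - e) y).totalDegree_le
            have h2 := hgxd e
            omega
        · rw [X2op_sum, map_sum]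
          apply Finset.sum_congr rfl
          intro e _
          rw [X2op_mul, map_add, map_mul, map_mul, hgxphi e, hgyphi (d - e)]

theorem stmt_2 (N : ℕ) [NeZero N] (hN : 3 ≤ N) (n : ℕ) (f : MvP N)
    (hmem : f ∈ Algebra.adjoin ℂ ({sig N 1, tauSub N, tauTop N} : Set (MvP N)))
    (hdeg : f.totalDegree ≤ n) :
    ∃ g : MvP N,
      g ∈ Algebra.adjoin ℂ ({sig N 1, tauSub N, tauTop N} : Set (MvP N)) ∧
      g.totalDegree ≤ n ∧ phi N g = X2op N f := by
  have hN2 : 2 ≤ N := by omega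
  choose hcomp g hgA hgd hgphi using main_lemma N hN2 hmem
  have hf : f = ∑ d ∈ Finset.range (n + 1), homogeneousComponent d f := by
    refine Eq.symm ?_
    calc (∑ d ∈ Finset.range (n + 1), homogeneousComponent d f)
        = ∑ d ∈ Finset.range (f.totalDegree + 1), homogeneousComponent d f := by
          refine (Finset.sum_subset (Finset.range_subset_range.mpr (by omega)) ?_).symm
          intro d hd hd'
          have h1 := Finset.mem_range.mp hd
          have h2 := Finset.mem_range.not.mp hd'
          apply homogeneousComponent_eq_zero
          omega
      _ = f := sum_homogeneousComponent f
  refine ⟨∑ d ∈ Finset.range (n + 1), g d, sum_mem (fun d _ => hgA d), ?_, ?_⟩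
  · refine le_trans (totalDegree_finset_sum _ _) (Finset.sup_le ?_)
    intro d hd
    have := Finset.mem_range.mp hd
    exact le_trans (hgd d) (by omega)
  · rw [map_sum]
    conv_rhs => rw [hf]
    rw [X2op_sum]
    exact Finset.sum_congr rfl (fun d _ => hgphi d)
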